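/- arXiv:math/0512181 — 2 statements merged into one kernel-verified Lean document; each statement's English description precedes it below -/
import Mathlib

section
/- The (2m+p)×(2m+p) block matrix A = [[0, Ω, G], [Ω, −Ω, 0], [Gᵀ, 0, 0]] (with blocks of sizes m, m, p) is invertible, and its inverse is the block matrix [[P, P, Hᵀ], [P, P − Ω⁻¹, Hᵀ], [H, H, −Σ]]. -/
/-! Write `K` for `Hᵀ`. Multiplying `A` by the proposed inverse blockwise, everything reduces to
`Ω P + G H = 1`, `Ω K = G Σ`, `Gᵀ P = 0` and `Gᵀ K = 1`. The first is `Ω P = 1 - G H`, read off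
the definitions; the third is `Gᵀ Ω⁻¹ G Σ = 1`. For the other two, symmetry of `Ω` makes `Σ`
symmetric, so `K = Ω⁻¹ G Σ`. A right inverse of a square matrix over a commutative ring is
two-sided. -/

open Matrix

theorem Matrix.fromRows_add_fromRows {m₁ m₂ n R : Type*} [Add R] (A₁ B₁ : Matrix m₁ n R)
    (A₂ B₂ : Matrix m₂ n R) :
    fromRows A₁ A₂ + fromRows B₁ B₂ = fromRows (A₁ + B₁) (A₂ + B₂) := by
  ext (_ | _) _ <;> rfl

section BlockProduct

variable {m p R : Type*} [Fintype m] [Fintype p] [DecidableEq m] [DecidableEq p] [Ring R]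

theorem fromBlocks_saddlePoint_mul_eq_one {Ω Ω' P : Matrix m m R} {G K : Matrix m p R}
    {H : Matrix p m R} {S : Matrix p p R} (hΩ : Ω * Ω' = 1) (hPH : Ω * P + G * H = 1)
    (hK : Ω * K = G * S) (hGP : Gᵀ * P = 0) (hGK : Gᵀ * K = 1) :
    fromBlocks 0 (fromCols Ω G) (fromRows Ω Gᵀ) (fromBlocks (-Ω) 0 0 0) *
      fromBlocks P (fromCols P K) (fromRows P H) (fromBlocks (P - Ω') K H (-S)) = 1 := by
  have hPH' : Ω * (P - Ω') + G * H = 0 := by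
    rw [mul_sub, hΩ, sub_add_eq_add_sub, hPH, sub_self]
  rw [fromBlocks_multiply, ← fromBlocks_one]
  congr 1
  · simp [fromCols_mul_fromRows, hPH]
  · simp [fromCols_mul_fromBlocks, hPH', hK, ← fromCols_zero]
  · simp [fromBlocks_mul_fromRows, fromRows_mul, fromRows_add_fromRows, hGP, ← fromRows_zero]
  · simp [fromBlocks_multiply, fromBlocks_add, hGP, hGK, mul_sub, hΩ, ← fromBlocks_one]

end BlockProduct

section GeneralizedLeastSquares

variable {m p R : Type*} [Fintype m] [Fintype p] [DecidableEq m] [CommRing R]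
  {Ω : Matrix m m R} {G : Matrix m p R} {S : Matrix p p R}

theorem mul_inv_sub_add_mul_eq_one (hΩ : IsUnit Ω.det) :
    Ω * (Ω⁻¹ - Ω⁻¹ * G * S * Gᵀ * Ω⁻¹) + G * (S * Gᵀ * Ω⁻¹) = 1 := by
  simp only [Matrix.mul_sub, ← Matrix.mul_assoc, mul_nonsing_inv Ω hΩ, Matrix.one_mul]
  abel

theorem transpose_mul_inv_sub_eq_zero [DecidableEq p] (hS : Gᵀ * Ω⁻¹ * G * S = 1) :
    Gᵀ * (Ω⁻¹ - Ω⁻¹ * G * S * Gᵀ * Ω⁻¹) = 0 := by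
  simp only [Matrix.mul_sub, ← Matrix.mul_assoc, hS, Matrix.one_mul, sub_self]

theorem Matrix.IsSymm.inv_transpose_mul_inv_mul [DecidableEq p] (hΩ : Ω.IsSymm) :
    (Gᵀ * Ω⁻¹ * G)⁻¹.IsSymm := by
  refine IsSymm.inv ?_
  rw [IsSymm]
  simp only [transpose_mul, transpose_transpose, hΩ.inv.eq, Matrix.mul_assoc]

theorem Matrix.IsSymm.transpose_mul_transpose_mul_inv (hΩ : Ω.IsSymm) (hS : S.IsSymm) :
    (S * Gᵀ * Ω⁻¹)ᵀ = Ω⁻¹ * G * S := by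
  simp only [transpose_mul, transpose_transpose, hΩ.inv.eq, hS.eq, Matrix.mul_assoc]

end GeneralizedLeastSquares

theorem block_three_by_three_inverse_general (m p : ℕ)
    (Ω : Matrix (Fin m) (Fin m) ℝ) (hΩ : Ω.PosDef)
    (G : Matrix (Fin m) (Fin p) ℝ)
    (hG : IsUnit (Gᵀ * Ω⁻¹ * G))
    (S : Matrix (Fin p) (Fin p) ℝ) (hS : S = (Gᵀ * Ω⁻¹ * G)⁻¹)
    (H : Matrix (Fin p) (Fin m) ℝ) (hH : H = S * Gᵀ * Ω⁻¹)
    (P : Matrix (Fin m) (Fin m) ℝ)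
    (hP : P = Ω⁻¹ - Ω⁻¹ * G * S * Gᵀ * Ω⁻¹)
    (A : Matrix (Fin m ⊕ (Fin m ⊕ Fin p)) (Fin m ⊕ (Fin m ⊕ Fin p)) ℝ)
    (hA : A = fromBlocks 0 (fromCols Ω G) (fromRows Ω Gᵀ)
      (fromBlocks (-Ω) 0 0 0)) :
    IsUnit A ∧
      A⁻¹ = fromBlocks P (fromCols P Hᵀ) (fromRows P H)
        (fromBlocks (P - Ω⁻¹) Hᵀ H (-S)) := by
  have hΩdet : IsUnit Ω.det := (isUnit_iff_isUnit_det Ω).mp hΩ.isUnit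
  have hΩsymm : Ω.IsSymm := isHermitian_iff_isSymm.mp hΩ.isHermitian
  have hGS : Gᵀ * Ω⁻¹ * G * S = 1 := hS ▸ mul_nonsing_inv _ ((isUnit_iff_isUnit_det _).mp hG)
  have hHt : Hᵀ = Ω⁻¹ * G * S := by
    rw [hH, hΩsymm.transpose_mul_transpose_mul_inv (hS ▸ hΩsymm.inv_transpose_mul_inv_mul)]
  have hΩHt : Ω * Hᵀ = G * S := by
    rw [hHt, ← Matrix.mul_assoc, ← Matrix.mul_assoc, mul_nonsing_inv Ω hΩdet, Matrix.one_mul]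
  have hGHt : Gᵀ * Hᵀ = 1 := by
    rw [hHt, ← Matrix.mul_assoc, ← Matrix.mul_assoc, hGS]
  have hAB : A * fromBlocks P (fromCols P Hᵀ) (fromRows P H)
      (fromBlocks (P - Ω⁻¹) Hᵀ H (-S)) = 1 :=
    hA ▸ fromBlocks_saddlePoint_mul_eq_one (mul_nonsing_inv Ω hΩdet)
      (hP ▸ hH ▸ mul_inv_sub_add_mul_eq_one hΩdet) hΩHt
      (hP ▸ transpose_mul_inv_sub_eq_zero hGS) hGHt
  exact ⟨IsUnit.of_mul_eq_one _ hAB, inv_eq_right_inv hAB⟩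

theorem block_three_by_three_inverse (m p : ℕ) (hm : 0 < m) (hp : 0 < p)
    (Ω : Matrix (Fin m) (Fin m) ℝ) (hΩ : Ω.PosDef)
    (G : Matrix (Fin m) (Fin p) ℝ)
    (hG : IsUnit (Gᵀ * Ω⁻¹ * G))
    (S : Matrix (Fin p) (Fin p) ℝ) (hS : S = (Gᵀ * Ω⁻¹ * G)⁻¹)
    (H : Matrix (Fin p) (Fin m) ℝ) (hH : H = S * Gᵀ * Ω⁻¹)
    (P : Matrix (Fin m) (Fin m) ℝ)
    (hP : P = Ω⁻¹ - Ω⁻¹ * G * S * Gᵀ * Ω⁻¹)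
    (A : Matrix (Fin m ⊕ (Fin m ⊕ Fin p)) (Fin m ⊕ (Fin m ⊕ Fin p)) ℝ)
    (hA : A = fromBlocks 0 (fromCols Ω G) (fromRows Ω Gᵀ)
      (fromBlocks (-Ω) 0 0 0)) :
    IsUnit A ∧
      A⁻¹ = fromBlocks P (fromCols P Hᵀ) (fromRows P H)
        (fromBlocks (P - Ω⁻¹) Hᵀ H (-S)) :=
  block_three_by_three_inverse_general m p Ω hΩ G hG S hS H hH P hP A hA
end

section
/- The (1+2m+p)×(1+2m+p) block matrix Φ = [[−1, 0, 0, 0], [0, 0, Ω, G], [0, Ω, −Ω, 0], [0, Gᵀ, 0, 0]] (with blocks of sizes 1, m, m, p) is invertible, and its inverse is the block matrix [[−1, 0, 0, 0], [0, P, P, Hᵀ], [0, P, P − Ω⁻¹, Hᵀ], [0, H, H, −Σ]]. -/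
/-!
The proposed matrix is a right inverse of `Φ`, hence its inverse. Multiplying out the blocks,
this reduces to `Ω P + G H = 1`, `Gᵀ P = 0`, `Gᵀ Hᵀ = 1` and `Ω Hᵀ = G Σ`; the last two use
`Hᵀ = Ω⁻¹ G Σ`, which holds because `Ω` and hence `Σ` are symmetric.
-/

open Matrix

theorem Matrix.fromRows_add {R m₁ m₂ n : Type*} [Add R] (A₁ B₁ : Matrix m₁ n R)
    (A₂ B₂ : Matrix m₂ n R) :
    fromRows A₁ A₂ + fromRows B₁ B₂ = fromRows (A₁ + B₁) (A₂ + B₂) := by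
  ext (i | i) j <;> rfl

theorem Matrix.fromBlocks_zero₁₂_zero₂₁_mul_eq_one {R l m : Type*} [Semiring R] [Fintype l]
    [DecidableEq l] [Fintype m] [DecidableEq m] {A A' : Matrix l l R} {B B' : Matrix m m R}
    (hA : A * A' = 1) (hB : B * B' = 1) :
    fromBlocks A 0 0 B * fromBlocks A' 0 0 B' = 1 := by
  simp [fromBlocks_multiply, hA, hB, fromBlocks_one]

namespace Matrix

variable {R : Type*} [CommRing R] {m p : Type*} [Fintype m] [DecidableEq m] [Fintype p]
  [DecidableEq p]

theorem saddlePoint_mul_eq_one {Ω P : Matrix m m R} {G : Matrix m p R} {H : Matrix p m R}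
    {S : Matrix p p R} (hΩ : Ω * Ω⁻¹ = 1) (hPH : Ω * P + G * H = 1) (hHS : Ω * Hᵀ = G * S)
    (hGP : Gᵀ * P = 0) (hGH : Gᵀ * Hᵀ = 1) :
    fromBlocks 0 (fromCols Ω G) (fromRows Ω Gᵀ) (fromBlocks (-Ω) 0 0 0) *
      fromBlocks P (fromCols P Hᵀ) (fromRows P H) (fromBlocks (P - Ω⁻¹) Hᵀ H (-S)) = 1 := by
  rw [fromBlocks_multiply, fromCols_mul_fromRows, fromCols_mul_fromBlocks, fromRows_mul,
    fromBlocks_mul_fromRows, fromRows_mul_fromCols, fromBlocks_multiply]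
  simp [Matrix.mul_sub, hΩ, hPH, hHS, hGP, hGH, sub_add_eq_add_sub, fromRows_add,
    fromBlocks_add, ← fromBlocks_one]

theorem IsSymm.transpose_inv_gram_mul_transpose_mul_inv {Ω : Matrix m m R} {G : Matrix m p R}
    (hΩ : Ω.IsSymm) :
    ((Gᵀ * Ω⁻¹ * G)⁻¹ * Gᵀ * Ω⁻¹)ᵀ = Ω⁻¹ * G * (Gᵀ * Ω⁻¹ * G)⁻¹ := by
  have hΩinv : (Ω⁻¹)ᵀ = Ω⁻¹ := hΩ.inv
  have hGram : (Gᵀ * Ω⁻¹ * G).IsSymm := by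
    simp [IsSymm, transpose_mul, hΩinv, Matrix.mul_assoc]
  rw [transpose_mul, transpose_mul, hΩinv, hGram.inv.eq, transpose_transpose,
    ← Matrix.mul_assoc]

end Matrix

theorem block_four_by_four_inverse_general (m p : ℕ)
    (Ω : Matrix (Fin m) (Fin m) ℝ) (hΩ : Ω.PosDef)
    (G : Matrix (Fin m) (Fin p) ℝ)
    (hG : IsUnit (Gᵀ * Ω⁻¹ * G))
    (S : Matrix (Fin p) (Fin p) ℝ) (hS : S = (Gᵀ * Ω⁻¹ * G)⁻¹)
    (H : Matrix (Fin p) (Fin m) ℝ) (hH : H = S * Gᵀ * Ω⁻¹)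
    (P : Matrix (Fin m) (Fin m) ℝ)
    (hP : P = Ω⁻¹ - Ω⁻¹ * G * S * Gᵀ * Ω⁻¹)
    (Φ : Matrix (Fin 1 ⊕ (Fin m ⊕ (Fin m ⊕ Fin p)))
      (Fin 1 ⊕ (Fin m ⊕ (Fin m ⊕ Fin p))) ℝ)
    (hΦ : Φ = fromBlocks (-1) 0 0
      (fromBlocks 0 (fromCols Ω G) (fromRows Ω Gᵀ)
        (fromBlocks (-Ω) 0 0 0))) :
    IsUnit Φ ∧
      Φ⁻¹ = fromBlocks (-1) 0 0
        (fromBlocks P (fromCols P Hᵀ) (fromRows P H)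
          (fromBlocks (P - Ω⁻¹) Hᵀ H (-S))) := by
  have hΩΩ : Ω * Ω⁻¹ = 1 := mul_nonsing_inv Ω (Ω.isUnit_iff_isUnit_det.mp hΩ.isUnit)
  have hGS : Gᵀ * Ω⁻¹ * G * S = 1 := hS ▸ mul_nonsing_inv _ ((isUnit_iff_isUnit_det _).mp hG)
  have hHT : Hᵀ = Ω⁻¹ * G * S := by
    rw [hH, hS, IsSymm.transpose_inv_gram_mul_transpose_mul_inv
      (isHermitian_iff_isSymm.mp hΩ.isHermitian)]
  have hInner := saddlePoint_mul_eq_one (P := P) (G := G) (H := H) (S := S) hΩΩ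
    (by simp [hP, hH, Matrix.mul_sub, ← Matrix.mul_assoc, hΩΩ])
    (by simp [hHT, ← Matrix.mul_assoc, hΩΩ])
    (by simp [hP, Matrix.mul_sub, ← Matrix.mul_assoc, hGS])
    (by simp [hHT, ← Matrix.mul_assoc, hGS])
  have key := hΦ ▸ fromBlocks_zero₁₂_zero₂₁_mul_eq_one (A := (-1 : Matrix (Fin 1) (Fin 1) ℝ))
    (A' := -1) (by simp) hInner
  exact ⟨(isUnit_iff_isUnit_det _).mpr (isUnit_det_of_right_inverse key), inv_eq_right_inv key⟩

theorem block_four_by_four_inverse (m p : ℕ) (hm : 0 < m) (hp : 0 < p)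
    (Ω : Matrix (Fin m) (Fin m) ℝ) (hΩ : Ω.PosDef)
    (G : Matrix (Fin m) (Fin p) ℝ)
    (hG : IsUnit (Gᵀ * Ω⁻¹ * G))
    (S : Matrix (Fin p) (Fin p) ℝ) (hS : S = (Gᵀ * Ω⁻¹ * G)⁻¹)
    (H : Matrix (Fin p) (Fin m) ℝ) (hH : H = S * Gᵀ * Ω⁻¹)
    (P : Matrix (Fin m) (Fin m) ℝ)
    (hP : P = Ω⁻¹ - Ω⁻¹ * G * S * Gᵀ * Ω⁻¹)
    (Φ : Matrix (Fin 1 ⊕ (Fin m ⊕ (Fin m ⊕ Fin p)))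
      (Fin 1 ⊕ (Fin m ⊕ (Fin m ⊕ Fin p))) ℝ)
    (hΦ : Φ = fromBlocks (-1) 0 0
      (fromBlocks 0 (fromCols Ω G) (fromRows Ω Gᵀ)
        (fromBlocks (-Ω) 0 0 0))) :
    IsUnit Φ ∧
      Φ⁻¹ = fromBlocks (-1) 0 0
        (fromBlocks P (fromCols P Hᵀ) (fromRows P H)
          (fromBlocks (P - Ω⁻¹) Hᵀ H (-S))) :=
  block_four_by_four_inverse_general m p Ω hΩ G hG S hS H hH P hP Φ hΦ
end
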